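/- arXiv:0906.2710 — 2 statements merged into one kernel-verified Lean document; each statement's English description precedes it below -/
import Mathlib

section
/- Every associate φ(x,z) of the one-dimensional additive formal group F_a(x,y) = x+y is of the form φ(x,z) = e^{z p(x) d/dx} x for a uniquely determined p(x) ∈ ℂ((x)); namely p(x) is the coefficient of z¹ in φ(x,z) (i.e., p(x) = ∂φ/∂z(x,0)). -/
noncomputable section
open scoped Classical

abbrev L : Type := LaurentSeries ℂ
abbrev LZ : Type := PowerSeries L

def Xl : L := HahnSeries.single 1 1

/-- coefficient of `z^n x^j` in an element of `ℂ((x))[[z]]`. -/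
def lzCoeff (f : LZ) (n : ℕ) (j : ℤ) : ℂ := ((PowerSeries.coeff (R := L) n) f).coeff j

/-- integer powers in a commutative ring, via `Ring.inverse` for negative exponents. -/
def zpowR {R : Type*} [CommRing R] (g : R) (m : ℤ) : R :=
  if 0 ≤ m then g ^ m.toNat else Ring.inverse g ^ (-m).toNat

/-- the Laurent series with prescribed coefficients, when it exists (else `0`). -/
def mkL (c : ℤ → ℂ) : L :=
  if h : ∃ g : L, ∀ j, g.coeff j = c j then h.choose else 0

def mkLZ (c : ℕ → ℤ → ℂ) : LZ :=
  if h : ∃ g : LZ, ∀ n j, lzCoeff g n j = c n j then h.choose else 0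

/-- Substitution `f(φ(x,z))` of `φ(x,z) ∈ ℂ((x))[[z]]` into `f ∈ ℂ((x))`. -/
def substL (f : L) (φ : LZ) : LZ :=
  mkLZ fun n j => ∑ᶠ m : ℤ, f.coeff m * lzCoeff (zpowR φ m) n j

/-- `φ(φ(x,x₂),x₀)` as an element of `ℂ((x))[[x₂]][[x₀]]` (outer variable `x₀`). -/
def assocLHS (φ : LZ) : PowerSeries LZ :=
  PowerSeries.mk fun n => substL ((PowerSeries.coeff (R := L) n) φ) φ

/-- `φ(x,x₀+x₂)` as an element of `ℂ((x))[[x₂]][[x₀]]` (outer variable `x₀`). -/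
def assocRHS (φ : LZ) : PowerSeries LZ :=
  PowerSeries.mk fun n => PowerSeries.mk fun m =>
    (((n+m).choose n : ℂ)) • (PowerSeries.coeff (R := L) (n+m)) φ

/-- `φ(x,z) ∈ ℂ((x))[[z]]` is an associate of the additive formal group:
`φ(x,0) = x` and `φ(φ(x,x₂),x₀) = φ(x,x₀+x₂)`. -/
def IsAssociate (φ : LZ) : Prop :=
  (PowerSeries.constantCoeff (R := L)) φ = Xl ∧ assocLHS φ = assocRHS φ

/-- the formal derivative `d/dx` on `ℂ((x))`. -/
def lderiv (f : L) : L := mkL fun j => ((j+1 : ℤ) : ℂ) * f.coeff (j+1)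

/-- the operator `p(x) d/dx` on `ℂ((x))`. -/
def pd (p : L) : L → L := fun f => p * lderiv f

/-- `e^{z p(x) d/dx} x = Σ_{n≥0} (z^n/n!) (p(x)d/dx)^n x ∈ ℂ((x))[[z]]`. -/
def expFlow (p : L) : LZ :=
  PowerSeries.mk fun n => ((n.factorial : ℂ))⁻¹ • ((pd p)^[n] Xl)

/-!
Write `p = ∂φ/∂z(x,0)`. Since `φ^m = x^m + z m x^(m-1) p + O(z²)` for every `m ∈ ℤ`, expanding
`f(φ(x,z)) = Σ_m f_m φ^m` gives `f(x) + z p(x) f'(x) + O(z²)`. Comparing the coefficients of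
`x₀^n x₂` in `φ(φ(x,x₂),x₀) = φ(x,x₀+x₂)` therefore gives `(n+1) φ_{n+1} = p φ_n'`, which
together with `φ_0 = x` forces `φ_n = (p d/dx)^n x / n!`. Uniqueness holds because the
`z`-coefficient of `e^{z p d/dx} x` is `p`.
The coefficients of `f(φ)` are finite sums because the `z^k`-coefficient of `φ^m` vanishes
below `x^(m-C_k)` with `C_k` independent of `m`.
-/

open PowerSeries

theorem Function.isPWO_support_of_forall_lt_eq_zero {M : Type*} [Zero M] {c : ℤ → M} {E : ℤ}
    (h : ∀ j < E, c j = 0) : (Function.support c).IsPWO :=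
  Set.IsWF.isPWO (BddBelow.wellFoundedOn_lt ⟨E, fun _ hj => not_lt.1 fun hlt => hj (h _ hlt)⟩)

namespace LaurentSeries

variable {R : Type*} [Semiring R]

theorem coeff_mul_eq_zero_of_lt {a b : LaurentSeries R} {α β j : ℤ}
    (ha : ∀ i < α, a.coeff i = 0) (hb : ∀ i < β, b.coeff i = 0) (hj : j < α + β) :
    (a * b).coeff j = 0 := by
  rw [HahnSeries.coeff_mul]
  refine Finset.sum_eq_zero fun ⟨i, i'⟩ hii => ?_
  obtain ⟨-, -, hsum⟩ := Finset.mem_antidiagonal.1 hii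
  rcases lt_or_ge i α with hi | hi
  · rw [ha i hi, zero_mul]
  · rw [hb i' (by simp only at hsum; omega), mul_zero]

theorem coeff_mul_eq_finsum (a b : LaurentSeries R) (j : ℤ) :
    (a * b).coeff j = ∑ᶠ k : ℤ, a.coeff k * b.coeff (j - k) := by
  set T : Finset ℤ := (Finset.antidiagonal a.isPWO_support b.isPWO_support j).image Prod.fst
  have hsupp : (Function.support fun k => a.coeff k * b.coeff (j - k)) ⊆ T := fun k hk =>
    Finset.mem_image.2 ⟨(k, j - k), Finset.mem_antidiagonal.2
      ⟨left_ne_zero_of_mul hk, right_ne_zero_of_mul hk, by simp⟩, rfl⟩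
  rw [finsum_eq_sum_of_support_subset _ hsupp, Finset.sum_image, HahnSeries.coeff_mul]
  · refine Finset.sum_congr rfl fun ⟨i, i'⟩ hii => ?_
    obtain ⟨-, -, hsum⟩ := Finset.mem_antidiagonal.1 hii
    simp only at hsum ⊢
    rw [show j - i = i' by omega]
  · intro x hx y hy hxy
    obtain ⟨-, -, hx⟩ := Finset.mem_antidiagonal.1 hx
    obtain ⟨-, -, hy⟩ := Finset.mem_antidiagonal.1 hy
    exact Prod.ext hxy (by omega)

end LaurentSeries

section PowerSeriesOverLaurentSeries

variable {R : Type*} [Semiring R]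

theorem exists_forall_coeff_coeff_eq_zero_of_lt (g : (LaurentSeries R)⟦X⟧) (n : ℕ) :
    ∃ E : ℤ, ∀ k ≤ n, ∀ j < E, (coeff k g).coeff j = 0 :=
  ⟨(Finset.range (n + 1)).inf' Finset.nonempty_range_add_one fun k => (coeff k g).order,
    fun _ hk _ hj => HahnSeries.coeff_eq_zero_of_lt_order
      (hj.trans_le (Finset.inf'_le _ (Finset.mem_range_succ_iff.2 hk)))⟩

/-- Each factor of positive `z`-degree in a term of `g^m` lowers the `x`-order by at most `D`. -/
theorem coeff_coeff_pow_eq_zero_of_lt {g : (LaurentSeries R)⟦X⟧} {e D : ℤ} {n : ℕ}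
    (hD : 0 ≤ D) (h₀ : ∀ j < e, (constantCoeff g).coeff j = 0)
    (h : ∀ k ≤ n, ∀ j < e - D, (coeff k g).coeff j = 0) (m : ℕ) :
    ∀ k ≤ n, ∀ j < m * e - k * D, (coeff k (g ^ m)).coeff j = 0 := by
  induction m with
  | zero =>
    intro k _ j hj
    rw [pow_zero, coeff_one]
    split_ifs with hk
    · subst hk
      rw [HahnSeries.coeff_one, if_neg (by simp at hj; omega)]
    · rfl
  | succ m ih =>
    intro k hk j hj
    rw [pow_succ, coeff_mul, HahnSeries.coeff_sum]
    refine Finset.sum_eq_zero fun ⟨i, i'⟩ hii => ?_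
    rw [Finset.HasAntidiagonal.mem_antidiagonal] at hii
    simp only at hii ⊢
    push_cast at hj
    rcases Nat.eq_zero_or_pos i' with rfl | hi'
    · rw [coeff_zero_eq_constantCoeff_apply]
      refine LaurentSeries.coeff_mul_eq_zero_of_lt (ih i (by omega)) h₀ ?_
      rw [show i = k by omega]
      linarith
    · refine LaurentSeries.coeff_mul_eq_zero_of_lt (ih i (by omega)) (h i' (by omega)) ?_
      have : ((i : ℤ) + 1) * D ≤ k * D := mul_le_mul_of_nonneg_right (by omega) hD
      linarith

theorem exists_forall_coeff_coeff_pow_eq_zero_of_lt {g : (LaurentSeries R)⟦X⟧} {e : ℤ}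
    (h₀ : ∀ j < e, (constantCoeff g).coeff j = 0) (n : ℕ) :
    ∃ D ≥ 0, ∀ m : ℕ, ∀ k ≤ n, ∀ j < m * e - k * D, (coeff k (g ^ m)).coeff j = 0 := by
  obtain ⟨E, hE⟩ := exists_forall_coeff_coeff_eq_zero_of_lt g n
  exact ⟨max (e - E) 0, le_max_right _ _, coeff_coeff_pow_eq_zero_of_lt (le_max_right _ _) h₀
    fun k hk j hj => hE k hk j (by omega)⟩

end PowerSeriesOverLaurentSeries

theorem zpowR_coe_units {R : Type*} [CommRing R] (u : Rˣ) (m : ℤ) :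
    zpowR (u : R) m = ↑(u ^ m) := by
  rw [zpowR]
  split_ifs with hm
  · rw [← Units.val_pow_eq_pow_val, ← zpow_natCast, Int.toNat_of_nonneg hm]
  · rw [Ring.inverse_unit, ← Units.val_pow_eq_pow_val, ← zpow_natCast,
      Int.toNat_of_nonneg (by omega), ← zpow_neg_one, ← zpow_mul]
    simp

namespace PowerSeries

variable {R : Type*} [CommRing R]

theorem constantCoeff_mul_constantCoeff_inv (u : R⟦X⟧ˣ) :
    constantCoeff (u : R⟦X⟧) * constantCoeff (↑u⁻¹ : R⟦X⟧) = 1 := by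
  rw [← map_mul, Units.mul_inv, map_one]

/-- `u ↦ u'(0) / u(0)`, a homomorphism by the Leibniz rule. -/
def logDerivAtZero : R⟦X⟧ˣ →* Multiplicative R where
  toFun u := .ofAdd (coeff 1 (u : R⟦X⟧) * constantCoeff (↑u⁻¹ : R⟦X⟧))
  map_one' := by simp
  map_mul' u v := by
    rw [← ofAdd_add]
    congr 1
    rw [mul_inv_rev, Units.val_mul, Units.val_mul, coeff_one_mul, map_mul]
    linear_combination
      coeff 1 (u : R⟦X⟧) * constantCoeff (↑u⁻¹ : R⟦X⟧) * constantCoeff_mul_constantCoeff_inv v +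
      coeff 1 (v : R⟦X⟧) * constantCoeff (↑v⁻¹ : R⟦X⟧) * constantCoeff_mul_constantCoeff_inv u

theorem coeff_one_units_zpow (u : R⟦X⟧ˣ) (m : ℤ) :
    coeff 1 (↑(u ^ m) : R⟦X⟧) = m * coeff 1 (u : R⟦X⟧) * constantCoeff (↑(u ^ (m - 1)) : R⟦X⟧) := by
  have h := congrArg Multiplicative.toAdd (map_zpow logDerivAtZero u m)
  simp only [logDerivAtZero, MonoidHom.coe_mk, OneHom.coe_mk, toAdd_zpow, toAdd_ofAdd] at h
  calc coeff 1 (↑(u ^ m) : R⟦X⟧)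
      = coeff 1 (↑(u ^ m) : R⟦X⟧) * constantCoeff (↑(u ^ m)⁻¹ : R⟦X⟧) *
          constantCoeff (↑(u ^ m) : R⟦X⟧) := by
        linear_combination -coeff 1 (↑(u ^ m) : R⟦X⟧) * constantCoeff_mul_constantCoeff_inv (u ^ m)
    _ = m * coeff 1 (u : R⟦X⟧) * constantCoeff (↑(u⁻¹ * u ^ m) : R⟦X⟧) := by
        rw [h, Units.val_mul, map_mul, zsmul_eq_mul]
        ring
    _ = _ := by rw [← zpow_neg_one, ← zpow_add, neg_add_eq_sub]

theorem constantCoeff_units_zpow {K : Type*} [Field K] (u : K⟦X⟧ˣ) (m : ℤ) :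
    constantCoeff (↑(u ^ m) : K⟦X⟧) = constantCoeff (u : K⟦X⟧) ^ m := by
  rw [show constantCoeff (u : K⟦X⟧) = (Units.map (constantCoeff (R := K)).toMonoidHom u : K)
    from rfl, ← Units.val_zpow_eq_zpow_val, ← map_zpow]
  rfl

end PowerSeries

theorem mkL_coeff {c : ℤ → ℂ} (h : ∃ g : L, ∀ j, g.coeff j = c j) (j : ℤ) :
    (mkL c).coeff j = c j := by
  rw [mkL, dif_pos h]
  exact h.choose_spec j

theorem lzCoeff_mkLZ {c : ℕ → ℤ → ℂ} (h : ∃ g : LZ, ∀ n j, lzCoeff g n j = c n j)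
    (n : ℕ) (j : ℤ) : lzCoeff (mkLZ c) n j = c n j := by
  rw [mkLZ, dif_pos h]
  exact h.choose_spec n j

theorem lderiv_coeff (f : L) (j : ℤ) :
    (lderiv f).coeff j = ((j + 1 : ℤ) : ℂ) * f.coeff (j + 1) := by
  refine mkL_coeff ⟨⟨_, Function.isPWO_support_of_forall_lt_eq_zero (E := f.order - 1)
    fun i hi => ?_⟩, fun _ => rfl⟩ j
  rw [HahnSeries.coeff_eq_zero_of_lt_order (by omega), mul_zero]

theorem lderiv_smul (c : ℂ) (f : L) : lderiv (c • f) = c • lderiv f := by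
  ext j
  simp only [lderiv_coeff, HahnSeries.coeff_smul, smul_eq_mul]
  ring

theorem lderiv_Xl : lderiv Xl = 1 := by
  ext j
  rw [lderiv_coeff, Xl, HahnSeries.coeff_single, HahnSeries.coeff_one]
  rcases eq_or_ne j 0 with rfl | hj
  · simp
  · rw [if_neg (by omega), if_neg hj, mul_zero]

theorem pd_smul (p : L) (c : ℂ) (f : L) : pd p (c • f) = c • pd p f := by
  rw [pd, pd, lderiv_smul, ← HahnSeries.C_mul_eq_smul, ← HahnSeries.C_mul_eq_smul, mul_left_comm]

theorem Xl_zpow (m : ℤ) : Xl ^ m = HahnSeries.single m 1 :=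
  (RatFunc.single_zpow m).symm

section ConstantCoeffXl

variable {φ : LZ} (hc : constantCoeff φ = Xl)
include hc

theorem isUnit_of_constantCoeff_eq_Xl : IsUnit φ := by
  rw [isUnit_iff_constantCoeff, hc]
  exact Ne.isUnit (HahnSeries.single_ne_zero one_ne_zero)

theorem zpowR_eq_units_zpow (m : ℤ) :
    zpowR φ m = ↑((isUnit_of_constantCoeff_eq_Xl hc).unit ^ m) := by
  rw [← zpowR_coe_units, IsUnit.unit_spec]

theorem constantCoeff_inv_unit_of_constantCoeff_eq_Xl :
    constantCoeff (↑(isUnit_of_constantCoeff_eq_Xl hc).unit⁻¹ : LZ) = HahnSeries.single (-1) 1 := by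
  rw [← zpow_neg_one, constantCoeff_units_zpow, IsUnit.unit_spec, hc, Xl_zpow]

theorem lzCoeff_zpowR_one (m j : ℤ) :
    lzCoeff (zpowR φ m) 1 j = m * (coeff 1 φ).coeff (j - (m - 1)) := by
  rw [lzCoeff, zpowR_eq_units_zpow hc, coeff_one_units_zpow, constantCoeff_units_zpow,
    IsUnit.unit_spec, hc, Xl_zpow, mul_comm, show j = (j - (m - 1)) + (m - 1) by omega,
    HahnSeries.coeff_single_mul_add, one_mul, ← map_intCast (HahnSeries.C (Γ := ℤ) (R := ℂ)) m,
    HahnSeries.C_mul_eq_smul, HahnSeries.coeff_smul, smul_eq_mul, add_sub_cancel_right]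

theorem exists_lzCoeff_zpowR_eq_zero_of_lt (n : ℕ) :
    ∃ C : ℤ, ∀ m : ℤ, ∀ k ≤ n, ∀ j < m - C, lzCoeff (zpowR φ m) k j = 0 := by
  have hsingle (a : ℤ) : ∀ j < a, (HahnSeries.single a (1 : ℂ)).coeff j = 0 :=
    fun _ hj => HahnSeries.coeff_single_of_ne hj.ne
  obtain ⟨D, hD, hpos⟩ := exists_forall_coeff_coeff_pow_eq_zero_of_lt (g := φ) (e := 1)
    (by rw [hc]; exact hsingle 1) n
  obtain ⟨D', hD', hneg⟩ := exists_forall_coeff_coeff_pow_eq_zero_of_lt (e := -1)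
    (by rw [constantCoeff_inv_unit_of_constantCoeff_eq_Xl hc]; exact hsingle (-1)) n
  refine ⟨n * max D D', fun m k hk j hj => ?_⟩
  have hkn : (k : ℤ) ≤ n := by exact_mod_cast hk
  have hkD : k * D ≤ n * max D D' := mul_le_mul hkn (le_max_left _ _) hD (by positivity)
  have hkD' : k * D' ≤ n * max D D' := mul_le_mul hkn (le_max_right _ _) hD' (by positivity)
  rw [zpowR_eq_units_zpow hc]
  obtain ⟨t, rfl | rfl⟩ := Int.eq_nat_or_neg m
  · rw [zpow_natCast, Units.val_pow_eq_pow_val, IsUnit.unit_spec]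
    exact hpos t k hk j (by linarith)
  · rw [zpow_neg, ← inv_zpow, zpow_natCast, Units.val_pow_eq_pow_val]
    exact hneg t k hk j (by linarith)

theorem lzCoeff_substL (f : L) (n : ℕ) (j : ℤ) :
    lzCoeff (substL f φ) n j = ∑ᶠ m : ℤ, f.coeff m * lzCoeff (zpowR φ m) n j := by
  choose C hC using exists_lzCoeff_zpowR_eq_zero_of_lt hc
  have hlt (n : ℕ) : ∀ j < f.order - C n, ∑ᶠ m : ℤ, f.coeff m * lzCoeff (zpowR φ m) n j = 0 :=
    fun j hj => finsum_eq_zero_of_forall_eq_zero fun m => by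
      rcases lt_or_ge m f.order with hm | hm
      · rw [HahnSeries.coeff_eq_zero_of_lt_order hm, zero_mul]
      · rw [hC n m n le_rfl j (by omega), mul_zero]
  exact lzCoeff_mkLZ ⟨mk fun n => ⟨_, Function.isPWO_support_of_forall_lt_eq_zero (hlt n)⟩,
    fun _ _ => by simp [lzCoeff]⟩ n j

theorem lzCoeff_substL_one (f : L) (j : ℤ) :
    lzCoeff (substL f φ) 1 j = (coeff 1 φ * lderiv f).coeff j := by
  rw [lzCoeff_substL hc, LaurentSeries.coeff_mul_eq_finsum,
    ← finsum_comp_equiv (Equiv.subLeft (j + 1))]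
  refine finsum_congr fun m => ?_
  rw [Equiv.subLeft_apply, lzCoeff_zpowR_one hc, lderiv_coeff,
    show j - (j + 1 - m - 1) = m by omega, show j - m + 1 = j + 1 - m by omega]
  ring

end ConstantCoeffXl

namespace IsAssociate

variable {φ : LZ} (h : IsAssociate φ)
include h

theorem substL_coeff (n : ℕ) :
    substL (coeff n φ) φ = mk fun m => ((n + m).choose n : ℂ) • coeff (n + m) φ := by
  simpa [assocLHS, assocRHS] using congrArg (coeff n) h.2

theorem succ_smul_coeff_succ (n : ℕ) :
    ((n : ℂ) + 1) • coeff (n + 1) φ = pd (coeff 1 φ) (coeff n φ) := by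
  ext j
  have hj : lzCoeff (substL (coeff n φ) φ) 1 j = _ := congrArg (lzCoeff · 1 j) (h.substL_coeff n)
  rw [lzCoeff_substL_one h.1, lzCoeff, coeff_mk, Nat.choose_succ_self_right] at hj
  rw [pd, hj, HahnSeries.coeff_smul, HahnSeries.coeff_smul]
  push_cast
  ring

theorem coeff_eq (n : ℕ) : coeff n φ = (n.factorial : ℂ)⁻¹ • (pd (coeff 1 φ))^[n] Xl := by
  induction n with
  | zero => simp [← h.1]
  | succ n ih =>
    have hn : (n : ℂ) + 1 ≠ 0 := Nat.cast_add_one_ne_zero n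
    rw [← inv_smul_smul₀ hn (coeff (n + 1) φ), h.succ_smul_coeff_succ, ih, pd_smul, smul_smul,
      Function.iterate_succ_apply', Nat.factorial_succ, Nat.cast_mul, mul_inv]
    push_cast
    rfl

end IsAssociate

theorem coeff_one_expFlow (p : L) : coeff 1 (expFlow p) = p := by
  simp [expFlow, pd, lderiv_Xl]

/-- Every associate of `F_a(x,y) = x+y` is of the form `e^{z p(x) d/dx} x` for a uniquely
determined `p(x) ∈ ℂ((x))`, namely `p(x) = ∂φ/∂z(x,0)`, the coefficient of `z¹` in `φ`. -/
theorem associate_eq_expFlow (φ : LZ) (h : IsAssociate φ) :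
    φ = expFlow ((PowerSeries.coeff (R := L) 1) φ) ∧
      ∀ p : L, φ = expFlow p → p = (PowerSeries.coeff (R := L) 1) φ := by
  refine ⟨PowerSeries.ext fun n => ?_, fun p hp => ?_⟩
  · rw [expFlow, coeff_mk, h.coeff_eq n]
  · rw [hp, coeff_one_expFlow]

end
end

section
/- Let φ(x,z) be an associate of the additive formal group F_a(x,y) = x+y with φ(x,z) ≠ x. Then for any nonzero f(x₁,x) ∈ ℂ((x₁,x)), the substitution f(φ(x,z),x) is a nonzero element of ℂ((x))[[z]]. -/
noncomputable section
open scoped Classical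

/-- the exponent `(a, b)` as a multidegree for two-variable power series. -/
def idx2 (a b : ℕ) : Fin 2 →₀ ℕ := Finsupp.single 0 a + Finsupp.single 1 b

/-- Substitution `p(φ(x,z), x)` of `x₁ = φ(x,z)`, `x₂ = x` into `p(x₁,x₂) ∈ ℂ[[x₁,x₂]]`. -/
def substMv (p : MvPowerSeries (Fin 2) ℂ) (φ : LZ) : LZ :=
  mkLZ fun n j => ∑ᶠ ab : ℕ × ℕ,
    (MvPowerSeries.coeff (R := ℂ) (idx2 ab.1 ab.2) p) *
      lzCoeff (φ ^ ab.1 * (PowerSeries.C (R := L) Xl) ^ ab.2) n j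

/-!
If the `z`-linear coefficient `q` of `φ` vanished, comparing the `x₀`-linear coefficients of
`φ(φ(x,x₂),x₀) = φ(x,x₀+x₂)` would kill every higher coefficient and force `φ = x`. So
`φ = x (1 + u)` with `u = (q/x) z + O(z²)`, `q ≠ 0`. Taylor expansion along the diagonal gives
`p(x(1+u), x) = Σ_k u^k D_k(x)`, where `D_k = x^k (1/k!) ∂₁^k p (x,x)`. The `D_k` determine `p`, so
some `D_k` is nonzero; for the least such `r`, the `z^r` coefficient of `p(φ, x)` is
`(q/x)^r D_r ≠ 0`. The prefactor `(φ x)^{-N}` is a unit.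
-/

open PowerSeries LaurentSeries Finset.HasAntidiagonal

namespace PowerSeries

variable {R : Type*} [CommRing R] {u : R⟦X⟧}

theorem coeff_pow_of_lt (hu : constantCoeff u = 0) {n k : ℕ} (h : n < k) : coeff n (u ^ k) = 0 :=
  coeff_of_lt_order n ((Nat.cast_lt.mpr h).trans_le (le_order_pow_of_constantCoeff_eq_zero k hu))

theorem coeff_self_pow (hu : constantCoeff u = 0) (k : ℕ) : coeff k (u ^ k) = coeff 1 u ^ k := by
  obtain ⟨v, rfl⟩ := X_dvd_iff.mpr hu
  simp [mul_pow, coeff_X_pow_mul', coeff_succ_X_mul]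

theorem coeff_one_add_pow (hu : constantCoeff u = 0) (a n : ℕ) :
    coeff n ((1 + u) ^ a) = ∑ k ∈ Finset.range (n + 1), (a.choose k : R) * coeff n (u ^ k) := by
  rw [add_comm, add_pow, map_sum]
  calc ∑ k ∈ Finset.range (a + 1), coeff n (u ^ k * 1 ^ (a - k) * (a.choose k : R⟦X⟧))
      = ∑ k ∈ Finset.range (a + n + 1), (a.choose k : R) * coeff n (u ^ k) := by
        refine Finset.sum_subset (Finset.range_subset_range.mpr (by omega)) (fun k _ hk => ?_)
          |>.trans (Finset.sum_congr rfl fun k _ => ?_)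
        · rw [Nat.choose_eq_zero_of_lt (by simpa using hk)]
          simp
        · rw [one_pow, mul_one, ← map_natCast (C (R := R)), coeff_mul_C, mul_comm]
    _ = _ := by
        refine (Finset.sum_subset (Finset.range_subset_range.mpr (by omega)) fun k _ hk => ?_).symm
        rw [coeff_pow_of_lt hu (by simpa using hk), mul_zero]

end PowerSeries

theorem LaurentSeries.coeff_mul_coe_eq_sum {R : Type*} [Semiring R] (e : R⸨X⸩) (D : R⟦X⟧)
    {j : ℤ} {K : ℕ} (hK : j - K ≤ e.order) :
    (e * D).coeff j = ∑ t ∈ Finset.range (K + 1), e.coeff (j - t) * coeff t D := by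
  have hlow : ∀ t : ℕ, j < e.order + t → e.coeff (j - t) = 0 := fun t ht =>
    HahnSeries.coeff_eq_zero_of_lt_order (by omega)
  conv_lhs => rw [← e.single_order_mul_powerSeriesPart, mul_assoc, ← coe_mul,
    HahnSeries.coeff_single_mul, one_mul, coeff_coe]
  split_ifs with hneg
  · exact (Finset.sum_eq_zero fun t _ => by rw [hlow t (by omega), zero_mul]).symm
  set s := (j - e.order).natAbs
  have hs : (s : ℤ) = j - e.order := by omega
  rw [coeff_mul, ← Finset.Nat.sum_antidiagonal_swap,
    Finset.Nat.sum_antidiagonal_eq_sum_range_succ_mk]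
  refine (Finset.sum_congr rfl fun t ht => ?_).trans
    (Finset.sum_subset (Finset.range_subset_range.mpr (by omega)) fun t _ ht => ?_)
  · simp only [Finset.mem_range] at ht
    rw [Prod.swap, LaurentSeries.powerSeriesPart_coeff]
    congr 2
    omega
  · rw [hlow t (by simp at ht; omega), zero_mul]

theorem finsum_eq_sum_range_sum_antidiagonal {M : Type*} [AddCommMonoid M] (f : ℕ × ℕ → M)
    {K : ℕ} (hf : ∀ ab : ℕ × ℕ, K < ab.1 + ab.2 → f ab = 0) :
    ∑ᶠ ab, f ab = ∑ t ∈ Finset.range (K + 1), ∑ ab ∈ antidiagonal t, f ab := by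
  rw [← Finset.sum_biUnion fun s _ t _ hst => Finset.disjoint_left.mpr fun ab hs ht => hst (by
    rw [mem_antidiagonal] at hs ht; omega)]
  refine finsum_eq_sum_of_support_subset f fun ab hab => ?_
  simp only [Finset.coe_biUnion, Finset.coe_range, Set.mem_iUnion, Set.mem_Iio, Finset.mem_coe,
    mem_antidiagonal, exists_prop]
  exact ⟨_, Nat.lt_succ_of_le (not_lt.mp fun hK => hab (hf ab hK)), rfl⟩

theorem ext_lzCoeff {f g : LZ} (h : ∀ n j, lzCoeff f n j = lzCoeff g n j) : f = g :=
  PowerSeries.ext fun n => HahnSeries.ext (funext (h n))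

theorem mkLZ_eq {c : ℕ → ℤ → ℂ} {g : LZ} (hg : ∀ n j, lzCoeff g n j = c n j) : mkLZ c = g := by
  have hex : ∃ g : LZ, ∀ n j, lzCoeff g n j = c n j := ⟨g, hg⟩
  rw [mkLZ, dif_pos hex]
  exact ext_lzCoeff fun n j => (hex.choose_spec n j).trans (hg n j).symm

theorem substL_zero (φ : LZ) : substL 0 φ = 0 :=
  mkLZ_eq fun n j => by simp [lzCoeff]

theorem Xl_ne_zero : Xl ≠ 0 := HahnSeries.single_ne_zero one_ne_zero

theorem IsAssociate.coeff_one_ne_zero {φ : LZ} (h : IsAssociate φ) (hx : φ ≠ C Xl) :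
    coeff 1 φ ≠ 0 := by
  intro hq
  have h1 := congrArg (coeff 1) h.2
  rw [assocLHS, assocRHS, coeff_mk, coeff_mk, hq, substL_zero] at h1
  refine hx (PowerSeries.ext fun n => ?_)
  rcases n with _ | m
  · simpa using h.1
  · have := congrArg (coeff m) h1
    simp only [coeff_mk, map_zero, Nat.choose_one_right] at this
    rw [coeff_C, if_neg m.succ_ne_zero, add_comm m 1]
    exact (smul_eq_zero.mp this.symm).resolve_left (by norm_cast; omega)

theorem idx2_eta (d : Fin 2 →₀ ℕ) : idx2 (d 0) (d 1) = d := by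
  ext i
  fin_cases i <;> simp [idx2]

section diagTaylor

variable {R : Type*} [CommSemiring R]

/-- `x^k · (1/k!) ∂₁^k p (x, x)`: the coefficient of `u^k` in `p(x(1+u), x)`. -/
def diagTaylor (p : MvPowerSeries (Fin 2) R) (k : ℕ) : R⟦X⟧ :=
  PowerSeries.mk fun t => ∑ ab ∈ antidiagonal t,
    (ab.1.choose k : R) * MvPowerSeries.coeff (idx2 ab.1 ab.2) p

theorem coeff_idx2_eq_zero_of_forall_diagTaylor_eq_zero {p : MvPowerSeries (Fin 2) R}
    (hp : ∀ k, diagTaylor p k = 0) (b a : ℕ) : MvPowerSeries.coeff (idx2 a b) p = 0 := by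
  induction b using Nat.strong_induction_on generalizing a with
  | _ b ih =>
    have h := congrArg (coeff (a + b)) (hp a)
    rw [diagTaylor, coeff_mk, map_zero, Finset.sum_eq_single (a, b) (fun ab hab hne => ?_)
      (fun h => absurd (mem_antidiagonal.mpr rfl) h), Nat.choose_self, Nat.cast_one, one_mul] at h
    · exact h
    rw [mem_antidiagonal] at hab
    rcases lt_or_gt_of_ne (fun h : ab.1 = a => hne (Prod.ext h (by omega))) with hlt | hgt
    · rw [Nat.choose_eq_zero_of_lt hlt, Nat.cast_zero, zero_mul]
    · rw [ih ab.2 (by omega), mul_zero]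

theorem exists_diagTaylor_ne_zero {p : MvPowerSeries (Fin 2) R} (hp : p ≠ 0) :
    ∃ k, diagTaylor p k ≠ 0 := by
  by_contra! h
  exact hp (MvPowerSeries.ext fun d => by
    rw [← idx2_eta d, coeff_idx2_eq_zero_of_forall_diagTaylor_eq_zero h, map_zero])

end diagTaylor

theorem lzCoeff_pow_mul_C_pow {φ u : LZ} (hφ : φ = C Xl * (1 + u)) (hu : constantCoeff u = 0)
    (a b n : ℕ) (j : ℤ) :
    lzCoeff (φ ^ a * C Xl ^ b) n j =
      ∑ k ∈ Finset.range (n + 1), (a.choose k : ℂ) * (coeff n (u ^ k)).coeff (j - (a + b)) := by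
  have hXl : Xl ^ (a + b) = HahnSeries.single ((a + b : ℕ) : ℤ) 1 := by
    rw [Xl, HahnSeries.single_pow, one_pow, nsmul_one]
  rw [lzCoeff, hφ, mul_pow, mul_right_comm, ← map_pow, ← map_pow, ← map_mul, ← pow_add,
    coeff_C_mul, coeff_one_add_pow hu, Finset.mul_sum, HahnSeries.coeff_sum]
  refine Finset.sum_congr rfl fun k _ => ?_
  rw [hXl, HahnSeries.coeff_single_mul, one_mul, ← nsmul_eq_mul, HahnSeries.coeff_nsmul]
  simp

theorem coeff_substMv {φ u : LZ} (hφ : φ = C Xl * (1 + u)) (hu : constantCoeff u = 0)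
    (p : MvPowerSeries (Fin 2) ℂ) (n : ℕ) :
    coeff n (substMv p φ) = ∑ k ∈ Finset.range (n + 1), coeff n (u ^ k) * diagTaylor p k := by
  suffices substMv p φ = PowerSeries.mk fun n =>
      ∑ k ∈ Finset.range (n + 1), coeff n (u ^ k) * diagTaylor p k by
    rw [this, coeff_mk]
  refine mkLZ_eq fun n j => ?_
  -- monomials of `p` of total degree `> K` do not reach the coefficient of `z^n x^j`
  set K := (j - (Finset.range (n + 1)).inf' Finset.nonempty_range_add_one
    fun k => (coeff n (u ^ k)).order).toNat
  have hK : ∀ k ∈ Finset.range (n + 1), j - K ≤ (coeff n (u ^ k)).order := fun k hk => by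
    have := Finset.inf'_le (fun k => (coeff n (u ^ k)).order) hk
    omega
  simp only [lzCoeff_pow_mul_C_pow hφ hu]
  rw [finsum_eq_sum_range_sum_antidiagonal _ (K := K) fun ab hab => ?vanish, lzCoeff, coeff_mk,
    HahnSeries.coeff_sum]
  case vanish =>
    refine mul_eq_zero_of_right _ (Finset.sum_eq_zero fun k hk => ?_)
    rw [HahnSeries.coeff_eq_zero_of_lt_order (by have := hK k hk; omega), mul_zero]
  rw [Finset.sum_congr rfl fun k hk => LaurentSeries.coeff_mul_coe_eq_sum _ _ (hK k hk),
    Finset.sum_comm]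
  refine Finset.sum_congr rfl fun t _ => ?_
  simp only [diagTaylor, coeff_mk, Finset.mul_sum]
  rw [Finset.sum_comm]
  refine Finset.sum_congr rfl fun ab hab => Finset.sum_congr rfl fun k _ => ?_
  have hab : ((ab.1 : ℤ) + ab.2) = t := by exact_mod_cast mem_antidiagonal.mp hab
  rw [hab]
  ring

theorem substMv_ne_zero {φ : LZ} (hφ0 : constantCoeff φ = Xl) (hφ1 : coeff 1 φ ≠ 0)
    {p : MvPowerSeries (Fin 2) ℂ} (hp : p ≠ 0) : substMv p φ ≠ 0 := by
  set u := C Xl⁻¹ * φ - 1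
  have hφ : φ = C Xl * (1 + u) := by
    rw [add_sub_cancel, ← mul_assoc, ← map_mul, mul_inv_cancel₀ Xl_ne_zero, map_one, one_mul]
  have hu : constantCoeff u = 0 := by simp [u, hφ0, Xl_ne_zero]
  have hu1 : coeff 1 u ≠ 0 := by simp [u, coeff_C_mul, Xl_ne_zero, hφ1]
  let r := Nat.find (exists_diagTaylor_ne_zero hp)
  have hr : diagTaylor p r ≠ 0 := Nat.find_spec (exists_diagTaylor_ne_zero hp)
  have hcoeff := coeff_substMv hφ hu p r
  rw [Finset.sum_eq_single_of_mem r (Finset.self_mem_range_succ r) fun k hk hkr => ?below,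
    coeff_self_pow hu] at hcoeff
  case below =>
    rw [not_not.mp (Nat.find_min _ (lt_of_le_of_ne (Finset.mem_range_succ_iff.mp hk) hkr)),
      coe_zero, mul_zero]
  intro h0
  rw [h0, map_zero] at hcoeff
  exact mul_ne_zero (pow_ne_zero r hu1)
    ((map_ne_zero_iff _ HahnSeries.ofPowerSeries_injective).mpr hr) hcoeff.symm

/-- `f ∈ ℂ((x₁,x₂)) = ∪_N (x₁x₂)^{−N} ℂ[[x₁,x₂]]` is encoded as `f = (x₁x₂)^{−N} p` with
`p ∈ ℂ[[x₁,x₂]]` (so `f ≠ 0` iff `p ≠ 0`), and `f(φ(x,z),x)` as `(φ(x,z)·x)^{−N} · p(φ(x,z),x)`. -/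
theorem substitution_ne_zero (φ : LZ) (h : IsAssociate φ) (hx : φ ≠ PowerSeries.C (R := L) Xl)
    (N : ℕ) (p : MvPowerSeries (Fin 2) ℂ) (hp : p ≠ 0) :
    (Ring.inverse (φ * PowerSeries.C (R := L) Xl)) ^ N * substMv p φ ≠ 0 := by
  have hunit : IsUnit (φ * C Xl) := by
    rw [isUnit_iff_constantCoeff, map_mul, h.1, constantCoeff_C]
    exact (mul_ne_zero Xl_ne_zero Xl_ne_zero).isUnit
  exact mul_ne_zero (hunit.ringInverse.pow N).ne_zero
    (substMv_ne_zero h.1 (h.coeff_one_ne_zero hx) hp)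

end
end
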